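/- arXiv:1907.05172 — 4 statements merged into one kernel-verified Lean document; each statement's English description precedes it below -/
import Mathlib

section
/- Let C be a symmetric monoidal category with a state dagger (an assignment ψ ↦ ψ♯ from states to effects satisfying: id_I♯ = id_I; (ψ ⊗ φ)♯ = ψ♯ ⊗ φ♯ up to unitors; ((id ⊗ φ♯) ∘ ψ)♯ = φ ∘ ψ♯ suitably bracketed; and (γ ∘ ψ)♯ = ψ♯ ∘ γ⁻¹ for coherence isomorphisms γ), and suppose every object has a state dagger dual, i.e. a dual whose cap equals (σ ∘ η)♯. Then the state dagger is injective: ψ♯ = φ♯ implies ψ = φ for states ψ, φ : I → A. -/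
/-!
Since the cap is `(σ ∘ η)♯`, the effect `η♯` is `ε ∘ σ`, so for a state `χ` of `A` the effect
`η♯ ∘ (1 ⊗ χ) ∘ ρ⁻¹` of `A*` is the transpose of `χ`, from which the snake equation recovers `χ`.
By the partial-composition axiom this effect equals `(ρ ∘ (1 ⊗ χ♯) ∘ η)♯`, so it depends on `χ`
only through `χ♯`.
-/

open CategoryTheory MonoidalCategory

/-- A state dagger on a symmetric monoidal category: an assignment of an effect
`ψ♯ : A ⟶ I` to each state `ψ : I ⟶ A`, compatible with the identity on `I`,
with tensoring (modulo unitors), with partial composition, and with the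
coherence isomorphisms (associators, unitors, symmetry). -/
structure StateDagger (C : Type*) [Category C] [MonoidalCategory C] [SymmetricCategory C] where
  sharp : ∀ {A : C}, (𝟙_ C ⟶ A) → (A ⟶ 𝟙_ C)
  sharp_id : sharp (𝟙 (𝟙_ C)) = 𝟙 (𝟙_ C)
  sharp_tensor : ∀ {A B : C} (ψ : 𝟙_ C ⟶ A) (φ : 𝟙_ C ⟶ B),
    sharp ((λ_ (𝟙_ C)).inv ≫ (ψ ⊗ₘ φ)) = (sharp ψ ⊗ₘ sharp φ) ≫ (λ_ (𝟙_ C)).hom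
  sharp_partial : ∀ {A B : C} (ψ : 𝟙_ C ⟶ A ⊗ B) (φ : 𝟙_ C ⟶ B),
    sharp (ψ ≫ (𝟙 A ⊗ₘ sharp φ) ≫ (ρ_ A).hom) = (ρ_ A).inv ≫ (𝟙 A ⊗ₘ φ) ≫ sharp ψ
  sharp_assoc : ∀ {A B D : C} (ψ : 𝟙_ C ⟶ (A ⊗ B) ⊗ D),
    sharp (ψ ≫ (α_ A B D).hom) = (α_ A B D).inv ≫ sharp ψ
  sharp_leftUnitor : ∀ {A : C} (ψ : 𝟙_ C ⟶ 𝟙_ C ⊗ A),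
    sharp (ψ ≫ (λ_ A).hom) = (λ_ A).inv ≫ sharp ψ
  sharp_rightUnitor : ∀ {A : C} (ψ : 𝟙_ C ⟶ A ⊗ 𝟙_ C),
    sharp (ψ ≫ (ρ_ A).hom) = (ρ_ A).inv ≫ sharp ψ
  sharp_braiding : ∀ {A B : C} (ψ : 𝟙_ C ⟶ A ⊗ B),
    sharp (ψ ≫ (β_ A B).hom) = (β_ A B).inv ≫ sharp ψ

section

variable {C : Type*} [Category C] [MonoidalCategory C]

theorem coev_comp_whiskerRight_leftUnitor_inv {X Y : C} (η : 𝟙_ C ⟶ Y ⊗ X) (χ : 𝟙_ C ⟶ X) :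
    η ≫ ((λ_ Y).inv ≫ χ ▷ Y) ▷ X = χ ≫ (ρ_ X).inv ≫ X ◁ η ≫ (α_ X Y X).inv := by
  have exchange : χ ≫ (ρ_ X).inv ≫ X ◁ η = η ≫ (λ_ (Y ⊗ X)).inv ≫ χ ▷ (Y ⊗ X) := by
    rw [rightUnitor_inv_naturality_assoc, ← unitors_inv_equal, ← whisker_exchange,
      leftUnitor_inv_naturality_assoc]
  rw [reassoc_of% exchange]
  monoidal

end

section Braided

variable {C : Type*} [Category C] [MonoidalCategory C] [BraidedCategory C]

theorem rightUnitor_inv_whiskerLeft_braiding {X Y : C} (χ : 𝟙_ C ⟶ X) :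
    (ρ_ Y).inv ≫ Y ◁ χ ≫ (β_ Y X).hom = (λ_ Y).inv ≫ χ ▷ Y := by
  rw [BraidedCategory.braiding_naturality_right, rightUnitor_inv_braiding_assoc]

theorem coev_comp_transpose_whiskerRight {X Y : C} (η : 𝟙_ C ⟶ Y ⊗ X) (ε : X ⊗ Y ⟶ 𝟙_ C)
    (snake : (ρ_ X).inv ≫ X ◁ η ≫ (α_ X Y X).inv ≫ ε ▷ X ≫ (λ_ X).hom = 𝟙 X)
    (χ : 𝟙_ C ⟶ X) :
    η ≫ ((ρ_ Y).inv ≫ Y ◁ χ ≫ (β_ Y X).hom ≫ ε) ▷ X ≫ (λ_ X).hom = χ := by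
  rw [reassoc_of% rightUnitor_inv_whiskerLeft_braiding, ← Category.assoc ((λ_ Y).inv),
    comp_whiskerRight, Category.assoc, reassoc_of% coev_comp_whiskerRight_leftUnitor_inv, snake,
    Category.comp_id]

end Braided

namespace StateDagger

variable {C : Type*} [Category C] [MonoidalCategory C] [SymmetricCategory C] (S : StateDagger C)

theorem sharp_eq_braiding_comp {X Y : C} (η : 𝟙_ C ⟶ Y ⊗ X) (ε : X ⊗ Y ⟶ 𝟙_ C)
    (hε : ε = S.sharp (η ≫ (β_ Y X).hom)) : S.sharp η = (β_ Y X).hom ≫ ε := by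
  rw [hε, S.sharp_braiding, Iso.hom_inv_id_assoc]

theorem rightUnitor_inv_whiskerLeft_sharp_congr {X Y : C} (η : 𝟙_ C ⟶ Y ⊗ X)
    {ψ φ : 𝟙_ C ⟶ X} (h : S.sharp ψ = S.sharp φ) :
    (ρ_ Y).inv ≫ Y ◁ ψ ≫ S.sharp η = (ρ_ Y).inv ≫ Y ◁ φ ≫ S.sharp η := by
  simp only [← id_tensorHom, ← S.sharp_partial, h]

end StateDagger

theorem stmt_7_general {C : Type*} [Category C] [MonoidalCategory C] [SymmetricCategory C]
    (S : StateDagger C) (dual : C → C)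
    (η : ∀ A : C, 𝟙_ C ⟶ dual A ⊗ A) (ε : ∀ A : C, A ⊗ dual A ⟶ 𝟙_ C)
    (snake₁ : ∀ A : C,
      (ρ_ A).inv ≫ (𝟙 A ⊗ₘ η A) ≫ (α_ A (dual A) A).inv ≫ (ε A ⊗ₘ 𝟙 A) ≫ (λ_ A).hom = 𝟙 A)
    (hε : ∀ A : C, ε A = S.sharp (η A ≫ (β_ (dual A) A).hom))
    {A : C} (ψ φ : 𝟙_ C ⟶ A) (h : S.sharp ψ = S.sharp φ) : ψ = φ := by
  have recover (χ : 𝟙_ C ⟶ A) :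
      η A ≫ ((ρ_ (dual A)).inv ≫ dual A ◁ χ ≫ S.sharp (η A)) ▷ A ≫ (λ_ A).hom = χ := by
    rw [S.sharp_eq_braiding_comp (η A) (ε A) (hε A)]
    exact coev_comp_transpose_whiskerRight (η A) (ε A)
      (by simpa only [id_tensorHom, tensorHom_id] using snake₁ A) χ
  rw [← recover ψ, S.rightUnitor_inv_whiskerLeft_sharp_congr (η A) h, recover φ]

/-- If a symmetric monoidal category has a state dagger and every
object has a state dagger dual (a dual whose cap equals `(σ ∘ η)♯`), then the
state dagger is injective on states. -/
theorem stmt_7 {C : Type*} [Category C] [MonoidalCategory C] [SymmetricCategory C]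
    (S : StateDagger C) (dual : C → C)
    (η : ∀ A : C, 𝟙_ C ⟶ dual A ⊗ A) (ε : ∀ A : C, A ⊗ dual A ⟶ 𝟙_ C)
    (snake₁ : ∀ A : C,
      (ρ_ A).inv ≫ (𝟙 A ⊗ₘ η A) ≫ (α_ A (dual A) A).inv ≫ (ε A ⊗ₘ 𝟙 A) ≫ (λ_ A).hom = 𝟙 A)
    (snake₂ : ∀ A : C,
      (λ_ (dual A)).inv ≫ (η A ⊗ₘ 𝟙 (dual A)) ≫ (α_ (dual A) A (dual A)).hom ≫
        (𝟙 (dual A) ⊗ₘ ε A) ≫ (ρ_ (dual A)).hom = 𝟙 (dual A))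
    (hε : ∀ A : C, ε A = S.sharp (η A ≫ (β_ (dual A) A).hom))
    {A : C} (ψ φ : 𝟙_ C ⟶ A) (h : S.sharp ψ = S.sharp φ) : ψ = φ :=
  stmt_7_general S dual η ε snake₁ hε ψ φ h
end

section
/- Let C be a symmetric monoidal category with discarding, zero morphisms, and normalisation (every non-zero state ρ factors as σ ∘ r for a unique causal state σ and scalar r). Then pure states are closed under normalisation: if ψ is a non-zero pure state with normalisation φ, then φ is pure. -/
/-!
A dilation `ρ` of the causal state `φ` is itself causal, and `r ≫ ρ` dilates `ψ = r ≫ φ`. Purity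
of `ψ` writes `r ≫ ρ` as `r ≫ (φ ⊗ σ)` with `σ` causal. So `ρ` and `φ ⊗ σ` are two causal
normalisations of the non-zero state `r ≫ ρ` with the same scalar, and uniqueness of
normalisation makes them equal.
-/

open CategoryTheory MonoidalCategory Limits

variable {C : Type*} [Category C] [MonoidalCategory C] [SymmetricCategory C]

def Causal (top : ∀ A : C, A ⟶ 𝟙_ C) {A : C} (σ : 𝟙_ C ⟶ A) : Prop :=
  σ ≫ top A = 𝟙 (𝟙_ C)

/-- A state `ψ : I ⟶ A` is pure when `ψ = 0` or every dilation `ρ : I ⟶ A ⊗ E`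
of `ψ` is of the form `ψ ⊗ σ` (modulo the unitor) for some causal state `σ`. -/
def IsPureState [HasZeroMorphisms C] (top : ∀ A : C, A ⟶ 𝟙_ C) {A : C}
    (ψ : 𝟙_ C ⟶ A) : Prop :=
  ψ = 0 ∨ ∀ (E : C) (ρ : 𝟙_ C ⟶ A ⊗ E), ρ ≫ (𝟙 A ⊗ₘ top E) ≫ (ρ_ A).hom = ψ →
    ∃ σ : 𝟙_ C ⟶ E, Causal top σ ∧ ρ = (λ_ (𝟙_ C)).inv ≫ (ψ ⊗ₘ σ)

def Normalisation [HasZeroMorphisms C] (top : ∀ A : C, A ⟶ 𝟙_ C) : Prop :=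
  ∀ {A : C} (ρ : 𝟙_ C ⟶ A), ρ ≠ 0 →
    ∃ (r : 𝟙_ C ⟶ 𝟙_ C) (σ : 𝟙_ C ⟶ A), Causal top σ ∧ ρ = r ≫ σ ∧
      ∀ (r' : 𝟙_ C ⟶ 𝟙_ C) (σ' : 𝟙_ C ⟶ A), Causal top σ' → ρ = r' ≫ σ' → σ' = σ

section

omit [SymmetricCategory C]

theorem tensorHom_comp_leftUnitor_hom_eq {A E : C} (f : A ⟶ 𝟙_ C) (g : E ⟶ 𝟙_ C) :
    (f ⊗ₘ g) ≫ (λ_ (𝟙_ C)).hom = (𝟙 A ⊗ₘ g) ≫ (ρ_ A).hom ≫ f := by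
  rw [unitors_equal, ← rightUnitor_naturality, ← Category.assoc, ← tensorHom_id,
    tensorHom_comp_tensorHom, Category.id_comp, Category.comp_id]

theorem leftUnitor_inv_comp_tensorHom_scalar {A E : C} (r : 𝟙_ C ⟶ 𝟙_ C) (φ : 𝟙_ C ⟶ A)
    (σ : 𝟙_ C ⟶ E) :
    (λ_ (𝟙_ C)).inv ≫ ((r ≫ φ) ⊗ₘ σ) = r ≫ (λ_ (𝟙_ C)).inv ≫ (φ ⊗ₘ σ) := by
  rw [← Category.id_comp σ, ← tensorHom_comp_tensorHom, unitors_inv_equal, tensorHom_id,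
    ← Category.assoc, ← rightUnitor_inv_naturality, Category.assoc, Category.id_comp]

section Discarding

variable {top : ∀ A : C, A ⟶ 𝟙_ C}
  (htop_tensor : ∀ A B : C, top (A ⊗ B) = (top A ⊗ₘ top B) ≫ (λ_ (𝟙_ C)).hom)
include htop_tensor

theorem Causal.of_marginal {A E : C} {θ : 𝟙_ C ⟶ A ⊗ E}
    (h : Causal top (θ ≫ (𝟙 A ⊗ₘ top E) ≫ (ρ_ A).hom)) : Causal top θ := by
  simpa only [Causal, htop_tensor, tensorHom_comp_leftUnitor_hom_eq, Category.assoc] using h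

theorem Causal.leftUnitor_inv_comp_tensorHom {A E : C} {φ : 𝟙_ C ⟶ A} {σ : 𝟙_ C ⟶ E}
    (hφ : Causal top φ) (hσ : Causal top σ) :
    Causal top ((λ_ (𝟙_ C)).inv ≫ (φ ⊗ₘ σ)) := by
  rw [Causal, Category.assoc, htop_tensor, ← Category.assoc (φ ⊗ₘ σ), tensorHom_comp_tensorHom,
    hφ, hσ, id_tensorHom_id, Category.id_comp, Iso.inv_hom_id]

end Discarding

theorem Normalisation.eq_of_scalar_comp_eq [HasZeroMorphisms C] {top : ∀ A : C, A ⟶ 𝟙_ C}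
    (hnorm : Normalisation top) {A : C} {ρ τ : 𝟙_ C ⟶ A} (hρ : Causal top ρ)
    (hτ : Causal top τ) {r : 𝟙_ C ⟶ 𝟙_ C} (hne : r ≫ ρ ≠ 0) (h : r ≫ ρ = r ≫ τ) : ρ = τ := by
  obtain ⟨_, _, -, -, huniq⟩ := hnorm (r ≫ ρ) hne
  rw [huniq r ρ hρ rfl, huniq r τ hτ h]

end

theorem stmt_10_general [HasZeroMorphisms C] (top : ∀ A : C, A ⟶ 𝟙_ C)
    (htop_tensor : ∀ A B : C, top (A ⊗ B) = (top A ⊗ₘ top B) ≫ (λ_ (𝟙_ C)).hom)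
    (hnorm : Normalisation top)
    {A : C} (ψ φ : 𝟙_ C ⟶ A) (hψ : ψ ≠ 0) (hpure : IsPureState top ψ)
    (hφ : Causal top φ) (hfac : ∃ r : 𝟙_ C ⟶ 𝟙_ C, ψ = r ≫ φ) :
    IsPureState top φ := by
  obtain ⟨r, rfl⟩ := hfac
  refine .inr fun E ρ hρ => ?_
  have hdil : (r ≫ ρ) ≫ (𝟙 A ⊗ₘ top E) ≫ (ρ_ A).hom = r ≫ φ := by rw [Category.assoc, hρ]
  have hne : r ≫ ρ ≠ 0 := fun h => hψ (by rw [← hdil, h, zero_comp])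
  obtain ⟨σ, hσ, hρσ⟩ := hpure.resolve_left hψ E (r ≫ ρ) hdil
  refine ⟨σ, hσ, hnorm.eq_of_scalar_comp_eq (Causal.of_marginal htop_tensor (hρ ▸ hφ))
    (Causal.leftUnitor_inv_comp_tensorHom htop_tensor hφ hσ) hne ?_⟩
  rw [hρσ, leftUnitor_inv_comp_tensorHom_scalar]

/-- In a symmetric monoidal category with discarding, zero
morphisms and normalisation, pure states are closed under normalisation: the
normalisation of a non-zero pure state is pure. -/
theorem stmt_10 [HasZeroMorphisms C] (top : ∀ A : C, A ⟶ 𝟙_ C)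
    (htop_tensor : ∀ A B : C, top (A ⊗ B) = (top A ⊗ₘ top B) ≫ (λ_ (𝟙_ C)).hom)
    (htop_unit : top (𝟙_ C) = 𝟙 (𝟙_ C))
    (hnorm : Normalisation top)
    {A : C} (ψ φ : 𝟙_ C ⟶ A) (hψ : ψ ≠ 0) (hpure : IsPureState top ψ)
    (hφ : Causal top φ) (hfac : ∃ r : 𝟙_ C ⟶ 𝟙_ C, ψ = r ≫ φ) :
    IsPureState top φ :=
  stmt_10_general top htop_tensor hnorm ψ φ hψ hpure hφ hfac
end

section
/- Let C be a symmetric monoidal category with discarding, zero morphisms, and normalisation. Then pure states are closed under tensor: if ψ : I → A and φ : I → B are pure states, then ψ ⊗ φ : I → A ⊗ B (composed with the unitor I ≅ I ⊗ I) is pure. -/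
open CategoryTheory MonoidalCategory Limits

variable {C : Type*} [Category C] [MonoidalCategory C] [SymmetricCategory C]

/-! Normalisation reduces the theorem to causal pure states: a non-zero pure state `r ≫ ψ₀`
has a pure causal normalisation `ψ₀`, and rescaling a pure causal state keeps it pure. For
causal `ψ` and `φ`, a dilation `ρ` of `ψ ⊗ φ` is, after reassociation, a dilation of `ψ`
with environment `B ⊗ E`, hence equal to `ψ ⊗ τ`; discarding `ψ` shows that `τ` dilates `φ`,
so `τ = φ ⊗ σ` and `ρ = (ψ ⊗ φ) ⊗ σ`. -/

section

-- A fresh variable: the lemmas below do not need the symmetry carried by `C`.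
variable {D : Type*} [Category D] [MonoidalCategory D]

lemma leftUnitor_inv_comp_tensorHom_eq_whiskerLeft {A B : D} (f : 𝟙_ D ⟶ A) (g : 𝟙_ D ⟶ B) :
    (λ_ (𝟙_ D)).inv ≫ (f ⊗ₘ g) = f ≫ (ρ_ A).inv ≫ A ◁ g := by
  rw [MonoidalCategory.tensorHom_def, unitors_inv_equal, rightUnitor_inv_naturality_assoc]

lemma leftUnitor_inv_comp_tensorHom_eq_whiskerRight {A B : D} (f : 𝟙_ D ⟶ A) (g : 𝟙_ D ⟶ B) :
    (λ_ (𝟙_ D)).inv ≫ (f ⊗ₘ g) = g ≫ (λ_ B).inv ≫ f ▷ B := by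
  rw [tensorHom_def', leftUnitor_inv_naturality_assoc]

lemma leftUnitor_inv_comp_tensorHom_scalar_left {A B : D} (r : 𝟙_ D ⟶ 𝟙_ D)
    (f : 𝟙_ D ⟶ A) (g : 𝟙_ D ⟶ B) :
    (λ_ (𝟙_ D)).inv ≫ ((r ≫ f) ⊗ₘ g) = r ≫ (λ_ (𝟙_ D)).inv ≫ (f ⊗ₘ g) := by
  simp only [leftUnitor_inv_comp_tensorHom_eq_whiskerLeft, Category.assoc]

lemma leftUnitor_inv_comp_tensorHom_scalar_right {A B : D} (r : 𝟙_ D ⟶ 𝟙_ D)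
    (f : 𝟙_ D ⟶ A) (g : 𝟙_ D ⟶ B) :
    (λ_ (𝟙_ D)).inv ≫ (f ⊗ₘ (r ≫ g)) = r ≫ (λ_ (𝟙_ D)).inv ≫ (f ⊗ₘ g) := by
  simp only [leftUnitor_inv_comp_tensorHom_eq_whiskerRight, Category.assoc]

lemma leftUnitor_inv_comp_zero_tensorHom [HasZeroMorphisms D] {A B : D} (g : 𝟙_ D ⟶ B) :
    (λ_ (𝟙_ D)).inv ≫ ((0 : 𝟙_ D ⟶ A) ⊗ₘ g) = 0 := by
  rw [leftUnitor_inv_comp_tensorHom_eq_whiskerLeft, zero_comp]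

lemma leftUnitor_inv_comp_tensorHom_zero [HasZeroMorphisms D] {A B : D} (f : 𝟙_ D ⟶ A) :
    (λ_ (𝟙_ D)).inv ≫ (f ⊗ₘ (0 : 𝟙_ D ⟶ B)) = 0 := by
  rw [leftUnitor_inv_comp_tensorHom_eq_whiskerRight, zero_comp]

lemma leftUnitor_inv_comp_tensorHom_comp_discardRight {A B : D} (f : 𝟙_ D ⟶ A)
    {g : 𝟙_ D ⟶ B} {t : B ⟶ 𝟙_ D} (hg : g ≫ t = 𝟙 _) :
    ((λ_ (𝟙_ D)).inv ≫ (f ⊗ₘ g)) ≫ (𝟙 A ⊗ₘ t) ≫ (ρ_ A).hom = f := by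
  rw [leftUnitor_inv_comp_tensorHom_eq_whiskerLeft, id_tensorHom]
  simp only [Category.assoc, ← whiskerLeft_comp_assoc, hg, whiskerLeft_id, Category.id_comp,
    Iso.inv_hom_id, Category.comp_id]

lemma leftUnitor_inv_comp_tensorHom_comp_discardLeft {A B : D} {f : 𝟙_ D ⟶ A}
    (g : 𝟙_ D ⟶ B) {t : A ⟶ 𝟙_ D} (hf : f ≫ t = 𝟙 _) :
    ((λ_ (𝟙_ D)).inv ≫ (f ⊗ₘ g)) ≫ (t ⊗ₘ 𝟙 B) ≫ (λ_ B).hom = g := by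
  rw [leftUnitor_inv_comp_tensorHom_eq_whiskerRight, tensorHom_id]
  simp only [Category.assoc, ← comp_whiskerRight_assoc, hf, id_whiskerRight, Category.id_comp,
    Iso.inv_hom_id, Category.comp_id]

lemma associator_hom_comp_whiskerLeft_discardRight (A B : D) {E : D} (t : E ⟶ 𝟙_ D) :
    (α_ A B E).hom ≫ (𝟙 A ⊗ₘ ((𝟙 B ⊗ₘ t) ≫ (ρ_ B).hom)) =
      (𝟙 (A ⊗ B) ⊗ₘ t) ≫ (ρ_ (A ⊗ B)).hom := by
  simp

lemma leftUnitor_inv_comp_tensorHom_comp_associator_inv {A B E : D} (f : 𝟙_ D ⟶ A)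
    (g : 𝟙_ D ⟶ B) (h : 𝟙_ D ⟶ E) :
    ((λ_ (𝟙_ D)).inv ≫ (f ⊗ₘ ((λ_ (𝟙_ D)).inv ≫ (g ⊗ₘ h)))) ≫ (α_ A B E).inv
      = (λ_ (𝟙_ D)).inv ≫ (((λ_ (𝟙_ D)).inv ≫ (f ⊗ₘ g)) ⊗ₘ h) := by
  simp only [leftUnitor_inv_comp_tensorHom_eq_whiskerLeft, Category.assoc]
  simp

lemma discardRight_comp_top (top : ∀ A : D, A ⟶ 𝟙_ D)
    (htop_tensor : ∀ A B : D, top (A ⊗ B) = (top A ⊗ₘ top B) ≫ (λ_ (𝟙_ D)).hom) (X E : D) :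
    ((𝟙 X ⊗ₘ top E) ≫ (ρ_ X).hom) ≫ top X = top (X ⊗ E) := by
  rw [htop_tensor, id_tensorHom, Category.assoc, ← rightUnitor_naturality, unitors_equal,
    whisker_exchange_assoc, MonoidalCategory.tensorHom_def, Category.assoc]

lemma causal_comp_discardRight_iff {top : ∀ A : D, A ⟶ 𝟙_ D}
    (htop_tensor : ∀ A B : D, top (A ⊗ B) = (top A ⊗ₘ top B) ≫ (λ_ (𝟙_ D)).hom)
    {A E : D} (ρ : 𝟙_ D ⟶ A ⊗ E) :
    Causal top (ρ ≫ (𝟙 A ⊗ₘ top E) ≫ (ρ_ A).hom) ↔ Causal top ρ := by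
  rw [Causal, Causal, Category.assoc, discardRight_comp_top top htop_tensor]

lemma Causal.leftUnitor_inv_comp_tensorHom_s11 {top : ∀ A : D, A ⟶ 𝟙_ D}
    (htop_tensor : ∀ A B : D, top (A ⊗ B) = (top A ⊗ₘ top B) ≫ (λ_ (𝟙_ D)).hom)
    {A B : D} {f : 𝟙_ D ⟶ A} {g : 𝟙_ D ⟶ B} (hf : Causal top f) (hg : Causal top g) :
    Causal top ((λ_ (𝟙_ D)).inv ≫ (f ⊗ₘ g)) := by
  rw [Causal] at hf hg ⊢
  rw [htop_tensor, Category.assoc, tensorHom_comp_tensorHom_assoc, hf, hg,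
    id_tensorHom_id, Category.id_comp, Iso.inv_hom_id]

section Purity

variable [HasZeroMorphisms D] {top : ∀ A : D, A ⟶ 𝟙_ D}

lemma Normalisation.eq_of_comp_eq (hnorm : Normalisation top) {A : D}
    {r r' : 𝟙_ D ⟶ 𝟙_ D} {σ σ' : 𝟙_ D ⟶ A} (hne : r ≫ σ ≠ 0) (hσ : Causal top σ)
    (hσ' : Causal top σ') (h : r ≫ σ = r' ≫ σ') : σ = σ' := by
  obtain ⟨_, _, _, _, huniq⟩ := hnorm _ hne
  exact (huniq r σ hσ rfl).trans (huniq r' σ' hσ' h).symm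

lemma IsPureState.scalar_comp
    (htop_tensor : ∀ A B : D, top (A ⊗ B) = (top A ⊗ₘ top B) ≫ (λ_ (𝟙_ D)).hom)
    (hnorm : Normalisation top) {A : D} {ψ : 𝟙_ D ⟶ A} (hψ : IsPureState top ψ)
    (hψc : Causal top ψ) (r : 𝟙_ D ⟶ 𝟙_ D) :
    IsPureState top (r ≫ ψ) := by
  by_cases h0 : r ≫ ψ = 0
  · exact Or.inl h0
  refine Or.inr fun E ρ hρ => ?_
  have hρ0 : ρ ≠ 0 := by
    rintro rfl
    exact h0 (by rw [← hρ, zero_comp])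
  obtain ⟨c, ρ₀, hρ₀c, rfl, -⟩ := hnorm ρ hρ0
  rw [Category.assoc] at hρ
  have hmarg : ρ₀ ≫ (𝟙 A ⊗ₘ top E) ≫ (ρ_ A).hom = ψ :=
    hnorm.eq_of_comp_eq (hρ ▸ h0) ((causal_comp_discardRight_iff htop_tensor ρ₀).2 hρ₀c)
      hψc hρ
  have hψ0 : ψ ≠ 0 := by
    rintro rfl
    exact h0 comp_zero
  obtain ⟨σ, hσ, hρ₀⟩ := hψ.resolve_left hψ0 E ρ₀ hmarg
  refine ⟨σ, hσ, ?_⟩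
  rw [← hρ, hmarg, hρ₀, leftUnitor_inv_comp_tensorHom_scalar_left]

lemma IsPureState.of_scalar_comp
    (htop_tensor : ∀ A B : D, top (A ⊗ B) = (top A ⊗ₘ top B) ≫ (λ_ (𝟙_ D)).hom)
    (hnorm : Normalisation top) {A : D} {r : 𝟙_ D ⟶ 𝟙_ D} {ψ : 𝟙_ D ⟶ A}
    (hψ : IsPureState top (r ≫ ψ)) (hne : r ≫ ψ ≠ 0) (hψc : Causal top ψ) :
    IsPureState top ψ := by
  refine Or.inr fun E ρ hρ => ?_
  have hrρ : (r ≫ ρ) ≫ (𝟙 A ⊗ₘ top E) ≫ (ρ_ A).hom = r ≫ ψ := by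
    rw [Category.assoc, hρ]
  obtain ⟨σ, hσ, h⟩ := hψ.resolve_left hne E (r ≫ ρ) hrρ
  refine ⟨σ, hσ, hnorm.eq_of_comp_eq (r := r) (r' := r) ?_ ?_ ?_ ?_⟩
  · rintro h0
    rw [h0, zero_comp] at hrρ
    exact hne hrρ.symm
  · exact (causal_comp_discardRight_iff htop_tensor ρ).1 (hρ ▸ hψc)
  · exact hψc.leftUnitor_inv_comp_tensorHom_s11 htop_tensor hσ
  · rw [h, leftUnitor_inv_comp_tensorHom_scalar_left]

lemma IsPureState.leftUnitor_inv_comp_tensorHom_s11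
    (htop_tensor : ∀ A B : D, top (A ⊗ B) = (top A ⊗ₘ top B) ≫ (λ_ (𝟙_ D)).hom)
    {A B : D} {ψ : 𝟙_ D ⟶ A} {φ : 𝟙_ D ⟶ B} (hψ : IsPureState top ψ)
    (hφ : IsPureState top φ) (hψc : Causal top ψ) (hφc : Causal top φ) :
    IsPureState top ((λ_ (𝟙_ D)).inv ≫ (ψ ⊗ₘ φ)) := by
  rcases hψ with rfl | hψ
  · exact Or.inl (leftUnitor_inv_comp_zero_tensorHom φ)
  rcases hφ with rfl | hφ
  · exact Or.inl (leftUnitor_inv_comp_tensorHom_zero ψ)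
  refine Or.inr fun E ρ hρ => ?_
  have hρA : (ρ ≫ (α_ A B E).hom) ≫ (𝟙 A ⊗ₘ top (B ⊗ E)) ≫ (ρ_ A).hom = ψ := by
    rw [← discardRight_comp_top top htop_tensor, id_tensor_comp]
    simp only [Category.assoc]
    rw [reassoc_of% associator_hom_comp_whiskerLeft_discardRight, reassoc_of% hρ,
      ← Category.assoc, leftUnitor_inv_comp_tensorHom_comp_discardRight ψ hφc]
  obtain ⟨τ, -, hτ⟩ := hψ (B ⊗ E) _ hρA
  have hψφ : (λ_ (𝟙_ D)).inv ≫ (ψ ⊗ₘ φ) =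
      (λ_ (𝟙_ D)).inv ≫ (ψ ⊗ₘ (τ ≫ (𝟙 B ⊗ₘ top E) ≫ (ρ_ B).hom)) := by
    rw [← hρ, ← associator_hom_comp_whiskerLeft_discardRight, ← Category.assoc, hτ,
      Category.assoc, tensorHom_comp_tensorHom, Category.comp_id]
  have hτB : τ ≫ (𝟙 B ⊗ₘ top E) ≫ (ρ_ B).hom = φ := by
    rw [← leftUnitor_inv_comp_tensorHom_comp_discardLeft (τ ≫ _) hψc, ← hψφ,
      leftUnitor_inv_comp_tensorHom_comp_discardLeft φ hψc]
  obtain ⟨σ, hσ, hτσ⟩ := hφ E τ hτB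
  refine ⟨σ, hσ, ?_⟩
  rw [← leftUnitor_inv_comp_tensorHom_comp_associator_inv, ← hτσ, ← hτ, Category.assoc,
    Iso.hom_inv_id, Category.comp_id]

end Purity

end

theorem stmt_11_general [HasZeroMorphisms C] (top : ∀ A : C, A ⟶ 𝟙_ C)
    (htop_tensor : ∀ A B : C, top (A ⊗ B) = (top A ⊗ₘ top B) ≫ (λ_ (𝟙_ C)).hom)
    (hnorm : Normalisation top)
    {A B : C} (ψ : 𝟙_ C ⟶ A) (φ : 𝟙_ C ⟶ B)
    (hψ : IsPureState top ψ) (hφ : IsPureState top φ) :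
    IsPureState top ((λ_ (𝟙_ C)).inv ≫ (ψ ⊗ₘ φ)) := by
  by_cases hψ0 : ψ = 0
  · exact Or.inl (hψ0 ▸ leftUnitor_inv_comp_zero_tensorHom φ)
  by_cases hφ0 : φ = 0
  · exact Or.inl (hφ0 ▸ leftUnitor_inv_comp_tensorHom_zero ψ)
  obtain ⟨r, ψ₀, hψ₀c, rfl, -⟩ := hnorm ψ hψ0
  obtain ⟨s, φ₀, hφ₀c, rfl, -⟩ := hnorm φ hφ0
  have hψ₀ := hψ.of_scalar_comp htop_tensor hnorm hψ0 hψ₀c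
  have hφ₀ := hφ.of_scalar_comp htop_tensor hnorm hφ0 hφ₀c
  rw [leftUnitor_inv_comp_tensorHom_scalar_left, leftUnitor_inv_comp_tensorHom_scalar_right,
    ← Category.assoc]
  exact (hψ₀.leftUnitor_inv_comp_tensorHom_s11 htop_tensor hφ₀ hψ₀c hφ₀c).scalar_comp htop_tensor
    hnorm (hψ₀c.leftUnitor_inv_comp_tensorHom_s11 htop_tensor hφ₀c) (r ≫ s)

/-- In a symmetric monoidal category with discarding, zero
morphisms and normalisation, pure states are closed under tensor: if `ψ` and `φ`
are pure states then so is `ψ ⊗ φ` (composed with the unitor `I ≅ I ⊗ I`). -/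
theorem stmt_11 [HasZeroMorphisms C] (top : ∀ A : C, A ⟶ 𝟙_ C)
    (htop_tensor : ∀ A B : C, top (A ⊗ B) = (top A ⊗ₘ top B) ≫ (λ_ (𝟙_ C)).hom)
    (htop_unit : top (𝟙_ C) = 𝟙 (𝟙_ C))
    (hnorm : Normalisation top)
    {A B : C} (ψ : 𝟙_ C ⟶ A) (φ : 𝟙_ C ⟶ B)
    (hψ : IsPureState top ψ) (hφ : IsPureState top φ) :
    IsPureState top ((λ_ (𝟙_ C)).inv ≫ (ψ ⊗ₘ φ)) :=
  stmt_11_general top htop_tensor hnorm ψ φ hψ hφ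
end

section
/- In the dagger compact category Rel of sets and relations (with ⊗ the cartesian product, dagger the relational converse, dual A* = A, cup the diagonal relation {(*,(a,a)) : a ∈ A}, and cap its converse), a morphism R : A → B is pure (in the dilation sense with discarding ⊤_A = A × {*}) if and only if R is the empty relation or R contains exactly one pair. -/
universe u

/-- A relation `R : A → B` in `Rel` (a subset of `A × B`) is pure in the dilation
sense (with discarding the total relation and with the bent state
`(R ⊗ id_{A*}) ∘ η_A : I → B ⊗ A*` identified with the subset
`{(b,a) | (a,b) ∈ R}` of `B × A`): `R` is empty, or every dilation `ρ` of that
state (a relation `I → (B × A) ⊗ E` whose marginal, obtained by discarding `E`,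
is that state) factors as the state tensored with a causal (i.e. nonempty) state
`σ` of `E`. -/
def RelPure {A B : Type u} (R : Set (A × B)) : Prop :=
  R = ∅ ∨ ∀ (E : Type u) (ρ : Set ((B × A) × E)),
    {p : B × A | ∃ e : E, (p, e) ∈ ρ} = {p : B × A | (p.2, p.1) ∈ R} →
    ∃ σ : Set E, σ.Nonempty ∧ ρ = {x : (B × A) × E | (x.1.2, x.1.1) ∈ R ∧ x.2 ∈ σ}

/-- In the dagger compact category `Rel` of sets and relations, a
morphism `R : A → B` is pure if and only if `R` is the empty relation or `R`
contains exactly one pair. -/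
theorem stmt_13 {A B : Type u} (R : Set (A × B)) :
    RelPure R ↔ (R = ∅ ∨ ∃ p : A × B, R = {p}) := by
  constructor
  · rintro (h | h)
    · exact Or.inl h
    rcases eq_or_ne R ∅ with hR | hR
    · exact Or.inl hR
    right
    -- use dilation with E = R
    set ρ : Set ((B × A) × R) := {x | x.2.val = (x.1.2, x.1.1)} with hρ
    have hmarg : {p : B × A | ∃ e : R, (p, e) ∈ ρ} = {p : B × A | (p.2, p.1) ∈ R} := by
      ext ⟨b, a⟩
      constructor
      · rintro ⟨e, he⟩
        simp only [hρ, Set.mem_setOf_eq] at he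
        have := e.property; rw [he] at this; exact this
      · intro hab
        exact ⟨⟨(a, b), hab⟩, rfl⟩
    obtain ⟨σ, ⟨e₀, he₀⟩, hfac⟩ := h R ρ hmarg
    refine ⟨e₀.val, ?_⟩
    ext q
    constructor
    · intro hq
      have hmem : ((q.2, q.1), e₀) ∈ ρ := by
        rw [hfac]; exact ⟨hq, he₀⟩
      simp only [hρ, Set.mem_setOf_eq] at hmem
      have : e₀.val = q := by rw [hmem]
      simp [← this]
    · intro hq
      simp only [Set.mem_singleton_iff] at hq
      rw [hq]; exact e₀.property
  · rintro (h | ⟨p, hp⟩)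
    · exact Or.inl h
    right
    intro E ρ hmarg
    refine ⟨{e : E | ((p.2, p.1), e) ∈ ρ}, ?_, ?_⟩
    · have : (p.2, p.1) ∈ {q : B × A | (q.2, q.1) ∈ R} := by simp [hp]
      rw [← hmarg] at this
      obtain ⟨e, he⟩ := this
      exact ⟨e, he⟩
    · ext ⟨q, e⟩
      constructor
      · intro hx
        have hq : q ∈ {q : B × A | (q.2, q.1) ∈ R} := by
          rw [← hmarg]; exact ⟨e, hx⟩
        simp only [hp, Set.mem_setOf_eq, Set.mem_singleton_iff] at hq
        have : q = (p.2, p.1) := by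
          cases q; cases p; simp [Prod.ext_iff] at hq ⊢; tauto
        constructor
        · simp [hp, this]
        · simp only [Set.mem_setOf_eq]; rwa [← this]
      · rintro ⟨hq, he⟩
        simp only [hp, Set.mem_singleton_iff] at hq
        have : q = (p.2, p.1) := by
          cases q; cases p; simp [Prod.ext_iff] at hq ⊢; tauto
        rwa [this]
end
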